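/- arXiv:2006.08923 — 4 statements merged into one kernel-verified Lean document; each statement's English description precedes it below -/
import Mathlib

section
/- Let x* be an optimal solution to the linear program min c^T x subject to Ax ≤ b, Gx = h, and let (λ*, ν*) with λ* ≤ 0 be an optimal solution to the associated dual max b^T λ + h^T ν subject to A^T λ + G^T ν = c, λ ≤ 0. Then c^T x* = b^T λ* + h^T ν* (strong duality at the optimum implies equal objective values). -/
/-!
Weak duality gives `bᵀλ + hᵀν ≤ cᵀx` for every feasible pair. For the converse it suffices to
produce one dual feasible `(λ, ν)` with `cᵀx ≤ bᵀλ + hᵀν`, i.e. to write `(c, cᵀx)` as a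
nonnegative combination of `-(Aᵢ, bᵢ)`, `±(Gⱼ, hⱼ)` and `(0, -1)`. By Farkas' lemma this fails only
if some functional `(y, -σ)` is nonnegative on these generators and negative at `(c, cᵀx)`; then
`σ ≥ 0`, `Ay ≤ σb`, `Gy = σh` and `cᵀy < σ cᵀx`, so `(x + y) / (1 + σ)` is feasible with a smaller
objective than `x`. Farkas' lemma itself is hyperplane separation from the finitely generated cone,
which is closed because, by the conic Carathéodory theorem, it is a finite union of images of
orthants under injective linear maps.
-/

open Matrix

section Algebra

variable {ι E : Type*} [AddCommGroup E] [Module ℝ E] {v : ι → E}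

theorem exists_sum_erase_eq_of_sum_smul_eq_zero [DecidableEq ι] {s : Finset ι} {t g : ι → ℝ}
    (ht : ∀ i ∈ s, 0 ≤ t i) (hg : ∑ i ∈ s, g i • v i = 0) (hpos : ∃ i ∈ s, 0 < g i) :
    ∃ i ∈ s, ∃ t' : ι → ℝ, (∀ j ∈ s.erase i, 0 ≤ t' j) ∧
      ∑ j ∈ s.erase i, t' j • v j = ∑ j ∈ s, t j • v j := by
  obtain ⟨k, hks, hgk⟩ := hpos
  -- Subtract the largest multiple `r • g` of the relation that keeps every coefficient nonnegative.
  obtain ⟨i, hi, hmin⟩ := (s.filter (0 < g ·)).exists_min_image (fun j => t j / g j)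
    ⟨k, Finset.mem_filter.2 ⟨hks, hgk⟩⟩
  obtain ⟨his, hgi⟩ := Finset.mem_filter.1 hi
  set r := t i / g i
  have hr : 0 ≤ r := div_nonneg (ht i his) hgi.le
  refine ⟨i, his, fun j => t j - r * g j, fun j hj => ?_, ?_⟩
  · have hjs := Finset.mem_of_mem_erase hj
    rcases lt_or_ge 0 (g j) with hgj | hgj
    · have := hmin j (Finset.mem_filter.2 ⟨hjs, hgj⟩)
      linarith [(le_div_iff₀ hgj).1 this]
    · nlinarith [ht j hjs]
  · have hzero : (t i - r * g i) • v i = 0 := by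
      rw [div_mul_cancel₀ _ hgi.ne', sub_self, zero_smul]
    show ∑ j ∈ s.erase i, (t j - r * g j) • v j = _
    rw [Finset.sum_erase s hzero]
    simp only [sub_smul, Finset.sum_sub_distrib, mul_smul, ← Finset.smul_sum, hg, smul_zero,
      sub_zero]

theorem exists_linearIndepOn_sum_smul_eq (s : Finset ι) (t : ι → ℝ) (ht : ∀ i ∈ s, 0 ≤ t i) :
    ∃ u ⊆ s, LinearIndepOn ℝ v u ∧ ∃ t' : ι → ℝ, (∀ i ∈ u, 0 ≤ t' i) ∧
      ∑ i ∈ u, t' i • v i = ∑ i ∈ s, t i • v i := by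
  classical
  induction s using Finset.strongInduction generalizing t with
  | H s ih =>
  by_cases hs : LinearIndepOn ℝ v s
  · exact ⟨s, subset_rfl, hs, t, ht, rfl⟩
  obtain ⟨g, hg, i, his, hgi⟩ := not_linearIndepOn_finset_iff.1 hs
  obtain ⟨j, hjs, t', ht', hsum⟩ : ∃ j ∈ s, ∃ t' : ι → ℝ, (∀ k ∈ s.erase j, 0 ≤ t' k) ∧
      ∑ k ∈ s.erase j, t' k • v k = ∑ k ∈ s, t k • v k := by
    rcases hgi.lt_or_gt with hneg | hpos
    · exact exists_sum_erase_eq_of_sum_smul_eq_zero (g := -g) ht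
        (by simp [neg_smul, Finset.sum_neg_distrib, hg]) ⟨i, his, by simpa⟩
    · exact exists_sum_erase_eq_of_sum_smul_eq_zero ht hg ⟨i, his, hpos⟩
  obtain ⟨u, hu, hli, t'', ht'', hsum'⟩ := ih _ (s.erase_ssubset hjs) t' ht'
  exact ⟨u, hu.trans (s.erase_subset j), hli, t'', ht'', hsum'.trans hsum⟩

theorem PointedCone.mem_hull_range_iff [Fintype ι] {x : E} :
    x ∈ PointedCone.hull ℝ (Set.range v) ↔ ∃ t : ι → ℝ, 0 ≤ t ∧ ∑ i, t i • v i = x := by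
  rw [Submodule.mem_span_range_iff_exists_fun]
  exact ⟨fun ⟨c, hc⟩ => ⟨fun i => c i, fun i => (c i).2, hc⟩,
    fun ⟨t, ht, hx⟩ => ⟨fun i => ⟨t i, ht i⟩, hx⟩⟩

end Algebra

section Topology

variable {ι E : Type*} [Fintype ι] [AddCommGroup E] [Module ℝ E] [TopologicalSpace E]
  [IsTopologicalAddGroup E] [ContinuousSMul ℝ E] [T2Space E] {v : ι → E}

theorem LinearIndependent.isClosed_image_nonneg (hv : LinearIndependent ℝ v) :
    IsClosed (Fintype.linearCombination ℝ v '' Set.Ici 0) :=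
  (LinearMap.isClosedEmbedding_of_injective
    (LinearMap.ker_eq_bot.2 hv.fintypeLinearCombination_injective)).isClosedMap _ isClosed_Ici

theorem PointedCone.isClosed_hull_range :
    IsClosed (PointedCone.hull ℝ (Set.range v) : Set E) := by
  classical
  have hunion : (PointedCone.hull ℝ (Set.range v) : Set E) =
      ⋃ u : {u : Finset ι // LinearIndepOn ℝ v u},
        Fintype.linearCombination ℝ (fun i : (u.1 : Set ι) => v i) '' Set.Ici 0 := by
    ext x
    simp only [SetLike.mem_coe, Set.mem_iUnion]
    constructor
    · intro hx
      obtain ⟨t, ht, rfl⟩ := mem_hull_range_iff.1 hx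
      obtain ⟨u, -, hu, t', ht', hsum⟩ :=
        exists_linearIndepOn_sum_smul_eq (v := v) Finset.univ t fun i _ => ht i
      refine ⟨⟨u, hu⟩, fun i => t' i, fun i => ht' i i.2, ?_⟩
      rw [Fintype.linearCombination_apply]
      exact (Finset.sum_coe_sort u _).trans hsum
    · rintro ⟨u, t, ht, rfl⟩
      rw [Fintype.linearCombination_apply]
      exact Submodule.sum_mem _ fun i _ => PointedCone.smul_mem _ (ht i) (subset_hull ⟨i, rfl⟩)
  rw [hunion]
  exact isClosed_iUnion_of_finite fun u => LinearIndependent.isClosed_image_nonneg u.2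

theorem exists_nonneg_sum_smul_eq_of_forall_nonneg [LocallyConvexSpace ℝ E] {w : E}
    (h : ∀ f : StrongDual ℝ E, (∀ i, 0 ≤ f (v i)) → 0 ≤ f w) :
    ∃ t : ι → ℝ, 0 ≤ t ∧ ∑ i, t i • v i = w := by
  let C : ProperCone ℝ E := ⟨PointedCone.hull ℝ (Set.range v), PointedCone.isClosed_hull_range⟩
  rw [← PointedCone.mem_hull_range_iff]
  by_contra hw
  obtain ⟨f, hfC, hfw⟩ := C.hyperplane_separation_point hw
  exact hfw.not_ge (h f fun i => hfC _ (PointedCone.subset_hull ⟨i, rfl⟩))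

end Topology

theorem LinearMap.apply_prod_eq_dotProduct_add {R n : Type*} [CommSemiring R] [Fintype n]
    [DecidableEq n] (f : (n → R) × R →ₗ[R] R) (w : n → R) (s : R) :
    f (w, s) = (fun j => f (Pi.single j 1, 0)) ⬝ᵥ w + f (0, 1) * s := by
  have hw : f (w, 0) = ∑ j, w j * f (Pi.single j 1, 0) := by
    rw [← LinearMap.inl_apply (R := R), ← LinearMap.comp_apply, LinearMap.pi_apply_eq_sum_univ]
    simp_rw [← Pi.single_apply, Pi.single_comm _ (1 : R), LinearMap.comp_apply,
      LinearMap.inl_apply, smul_eq_mul]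
  have hs : f (0, s) = f (0, 1) * s := by
    simpa [mul_comm] using f.map_smul s ((0 : n → R), (1 : R))
  rw [← add_zero w, ← zero_add s, ← Prod.mk_add_mk, map_add, hw, hs]
  simp [dotProduct, mul_comm]

section LinearProgram

variable {m n p : Type*}
  {A : Matrix m n ℝ} {b : m → ℝ} {G : Matrix p n ℝ} {h : p → ℝ} {c x : n → ℝ}

theorem dotProduct_add_dotProduct_le_of_feasible [Fintype m] [Fintype n] [Fintype p]
    {l : m → ℝ} {ν : p → ℝ}
    (hAx : A *ᵥ x ≤ b) (hGx : G *ᵥ x = h) (hc : Aᵀ *ᵥ l + Gᵀ *ᵥ ν = c) (hl : l ≤ 0) :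
    b ⬝ᵥ l + h ⬝ᵥ ν ≤ c ⬝ᵥ x := by
  have hcx : c ⬝ᵥ x = A *ᵥ x ⬝ᵥ l + G *ᵥ x ⬝ᵥ ν := by
    rw [← hc, add_dotProduct, mulVec_transpose, mulVec_transpose, ← dotProduct_mulVec,
      ← dotProduct_mulVec, dotProduct_comm l, dotProduct_comm ν]
  have hAl := dotProduct_le_dotProduct_of_nonneg_right hAx (neg_nonneg.2 hl)
  rw [dotProduct_neg, dotProduct_neg] at hAl
  rw [hcx, hGx]
  linarith

theorem mul_dotProduct_le_dotProduct_of_mulVec_le_smul [Fintype n]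
    (hAx : A *ᵥ x ≤ b) (hGx : G *ᵥ x = h)
    (hxopt : ∀ z, A *ᵥ z ≤ b → G *ᵥ z = h → c ⬝ᵥ x ≤ c ⬝ᵥ z) {y : n → ℝ} {σ : ℝ} (hσ : 0 ≤ σ)
    (hAy : A *ᵥ y ≤ σ • b) (hGy : G *ᵥ y = σ • h) :
    σ * (c ⬝ᵥ x) ≤ c ⬝ᵥ y := by
  have hσ1 : 0 < 1 + σ := by linarith
  -- `(x + y) / (1 + σ)` is feasible.
  have hopt := hxopt ((1 + σ)⁻¹ • (x + y)) ?_ ?_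
  · rw [dotProduct_smul, dotProduct_add, smul_eq_mul, le_inv_mul_iff₀ hσ1] at hopt
    linarith
  · rw [mulVec_smul, mulVec_add, inv_smul_le_iff_of_pos hσ1, add_smul, one_smul]
    exact add_le_add hAx hAy
  · rw [mulVec_smul, mulVec_add, hGx, hGy, inv_smul_eq_iff₀ hσ1.ne', add_smul, one_smul]

variable (A b G h) in
def lpConeGenerators : m ⊕ p ⊕ p ⊕ Unit → (n → ℝ) × ℝ :=
  Sum.elim (fun i => -(A i, b i)) <| Sum.elim (fun j => (G j, h j)) <|
    Sum.elim (fun j => -(G j, h j)) fun _ => (0, -1)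

theorem sum_smul_lpConeGenerators [Fintype m] [Fintype p] (t : m ⊕ p ⊕ p ⊕ Unit → ℝ) :
    ∑ i, t i • lpConeGenerators A b G h i =
      (Aᵀ *ᵥ (fun i => -t (.inl i)) + Gᵀ *ᵥ (fun j => t (.inr (.inl j)) - t (.inr (.inr (.inl j)))),
        b ⬝ᵥ (fun i => -t (.inl i)) + h ⬝ᵥ (fun j => t (.inr (.inl j)) - t (.inr (.inr (.inl j))))
          - t (.inr (.inr (.inr ())))) := by
  refine Prod.ext ?_ ?_
  · simp [lpConeGenerators, Fintype.sum_sum_type, Prod.fst_sum, mulVec_transpose, vecMul_eq_sum,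
      sub_smul, Finset.sum_sub_distrib, ← sub_eq_add_neg]
  · simp only [lpConeGenerators, Fintype.sum_sum_type, Prod.snd_add, Prod.snd_sum, Sum.elim_inl,
      Sum.elim_inr, Prod.snd_neg, Prod.smul_snd, smul_eq_mul, Fintype.sum_unique, dotProduct,
      sub_mul, Finset.sum_sub_distrib, mul_neg, neg_mul, Finset.sum_neg_distrib, mul_comm (b _),
      mul_comm (h _)]
    ring

theorem nonneg_apply_of_forall_nonneg_lpConeGenerators [Fintype n] [DecidableEq n]
    (hAx : A *ᵥ x ≤ b) (hGx : G *ᵥ x = h)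
    (hxopt : ∀ z, A *ᵥ z ≤ b → G *ᵥ z = h → c ⬝ᵥ x ≤ c ⬝ᵥ z) (f : StrongDual ℝ ((n → ℝ) × ℝ))
    (hf : ∀ i, 0 ≤ f (lpConeGenerators A b G h i)) :
    0 ≤ f (c, c ⬝ᵥ x) := by
  set y : n → ℝ := fun j => f (Pi.single j 1, 0)
  set σ : ℝ := -f (0, 1)
  have hf' : ∀ w s, f (w, s) = y ⬝ᵥ w - σ * s := by
    intro w s
    rw [← ContinuousLinearMap.coe_coe, LinearMap.apply_prod_eq_dotProduct_add]
    simp only [ContinuousLinearMap.coe_coe, y, σ]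
    ring
  have hσ : 0 ≤ σ := by simpa [lpConeGenerators, hf'] using hf (.inr (.inr (.inr ())))
  have hAy : A *ᵥ y ≤ σ • b := fun i => by
    have := hf (.inl i)
    simp only [lpConeGenerators, Sum.elim_inl, Prod.neg_mk, hf', dotProduct_neg] at this
    simp only [mulVec, Pi.smul_apply, smul_eq_mul, dotProduct_comm (A i)]
    linarith
  have hGy : G *ᵥ y = σ • h := funext fun j => by
    have h₁ := hf (.inr (.inl j))
    have h₂ := hf (.inr (.inr (.inl j)))
    simp only [lpConeGenerators, Sum.elim_inl, Sum.elim_inr, Prod.neg_mk, hf',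
      dotProduct_neg] at h₁ h₂
    simp only [mulVec, Pi.smul_apply, smul_eq_mul, dotProduct_comm (G j)]
    linarith
  have := mul_dotProduct_le_dotProduct_of_mulVec_le_smul hAx hGx hxopt hσ hAy hGy
  rw [hf', dotProduct_comm]
  linarith

theorem exists_dual_feasible_dotProduct_le [Fintype m] [Fintype n] [Fintype p] [DecidableEq n]
    (hAx : A *ᵥ x ≤ b) (hGx : G *ᵥ x = h)
    (hxopt : ∀ z, A *ᵥ z ≤ b → G *ᵥ z = h → c ⬝ᵥ x ≤ c ⬝ᵥ z) :
    ∃ (l : m → ℝ) (ν : p → ℝ), Aᵀ *ᵥ l + Gᵀ *ᵥ ν = c ∧ l ≤ 0 ∧ c ⬝ᵥ x ≤ b ⬝ᵥ l + h ⬝ᵥ ν := by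
  obtain ⟨t, ht, hsum⟩ := exists_nonneg_sum_smul_eq_of_forall_nonneg
    (nonneg_apply_of_forall_nonneg_lpConeGenerators hAx hGx hxopt)
  rw [sum_smul_lpConeGenerators, Prod.mk.injEq] at hsum
  exact ⟨_, _, hsum.1, fun i => neg_nonpos.2 (ht _), by
    linarith [show (0 : ℝ) ≤ t (.inr (.inr (.inr ()))) from ht _]⟩

end LinearProgram

/-- Strong duality at the optimum: if `x` is optimal for the primal LP
`min cᵀx s.t. Ax ≤ b, Gx = h` and `(lam, nu)` with `lam ≤ 0` is optimal for the dual
`max bᵀλ + hᵀν s.t. Aᵀλ + Gᵀν = c, λ ≤ 0`, then the objective values agree. -/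
theorem stmt_0 {D M1 M2 : ℕ}
    (A : Matrix (Fin M1) (Fin D) ℝ) (b : Fin M1 → ℝ)
    (G : Matrix (Fin M2) (Fin D) ℝ) (h : Fin M2 → ℝ) (c : Fin D → ℝ)
    (x : Fin D → ℝ) (lam : Fin M1 → ℝ) (nu : Fin M2 → ℝ)
    (hxfeas : A.mulVec x ≤ b ∧ G.mulVec x = h)
    (hxopt : ∀ y : Fin D → ℝ, A.mulVec y ≤ b → G.mulVec y = h → c ⬝ᵥ x ≤ c ⬝ᵥ y)
    (hdfeas : Aᵀ.mulVec lam + Gᵀ.mulVec nu = c ∧ lam ≤ 0)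
    (hdopt : ∀ (l : Fin M1 → ℝ) (n : Fin M2 → ℝ),
      Aᵀ.mulVec l + Gᵀ.mulVec n = c → l ≤ 0 →
      b ⬝ᵥ l + h ⬝ᵥ n ≤ b ⬝ᵥ lam + h ⬝ᵥ nu) :
    c ⬝ᵥ x = b ⬝ᵥ lam + h ⬝ᵥ nu := by
  obtain ⟨hAx, hGx⟩ := hxfeas
  obtain ⟨l, n, hln, hl, hcx⟩ := exists_dual_feasible_dotProduct_le hAx hGx hxopt
  exact le_antisymm (hcx.trans (hdopt l n hln hl))
    (dotProduct_add_dotProduct_le_of_feasible hAx hGx hdfeas.1 hdfeas.2)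
end

section
/- Let (x, λ, ν) satisfy the KKT conditions for the LP min c^T x s.t. Ax ≤ b, Gx = h. Let dx ∈ R^D, and suppose perturbation matrices dA, db, dG, dh satisfy: G dx = dh − dG x, and for every index i with λ_i < 0, A_i dx = db_i − dA_i x. Then c^T dx = λ^T (db − dA x) + ν^T (dh − dG x). -/
open Matrix

/-- The substitution identity: under KKT conditions, if the perturbations satisfy
`G dx = dh − dG x` and, for each `i` with `λᵢ < 0`, `Aᵢ dx = dbᵢ − dAᵢ x`, then
`cᵀ dx = λᵀ(db − dA x) + νᵀ(dh − dG x)`. -/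
theorem stmt_3 {D M1 M2 : ℕ}
    (A dA : Matrix (Fin M1) (Fin D) ℝ) (b db : Fin M1 → ℝ)
    (G dG : Matrix (Fin M2) (Fin D) ℝ) (h dh : Fin M2 → ℝ) (c : Fin D → ℝ)
    (x dx : Fin D → ℝ) (lam : Fin M1 → ℝ) (nu : Fin M2 → ℝ)
    (hineq : A.mulVec x ≤ b) (heq : G.mulVec x = h)
    (hstat : Aᵀ.mulVec lam + Gᵀ.mulVec nu = c) (hlam : lam ≤ 0)
    (hcs : ∀ i : Fin M1, lam i * (A.mulVec x i - b i) = 0)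
    (hGdx : G.mulVec dx = dh - dG.mulVec x)
    (hAdx : ∀ i : Fin M1, lam i < 0 → A.mulVec dx i = db i - dA.mulVec x i) :
    c ⬝ᵥ dx = lam ⬝ᵥ (db - dA.mulVec x) + nu ⬝ᵥ (dh - dG.mulVec x) := by
  have h1 : c ⬝ᵥ dx = lam ⬝ᵥ A.mulVec dx + nu ⬝ᵥ G.mulVec dx := by
    rw [← hstat, add_dotProduct, mulVec_transpose, mulVec_transpose,
      ← dotProduct_mulVec, ← dotProduct_mulVec]
  have h2 : lam ⬝ᵥ A.mulVec dx = lam ⬝ᵥ (db - dA.mulVec x) := by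
    unfold dotProduct
    refine Finset.sum_congr rfl fun i _ => ?_
    rcases lt_or_eq_of_le (hlam i) with hi | hi
    · rw [hAdx i hi]; simp [Pi.sub_apply]
    · rw [hi]; simp
  rw [h1, h2, hGdx]
end

section
/- Let (x, λ, ν) satisfy the KKT conditions for the LP min c^T x s.t. Ax ≤ b, Gx = h, fix indices i ∈ {1,…,M2} and j ∈ {1,…,D}, and suppose dx ∈ R^D satisfies G dx = −x_j e_i and A_k dx = 0 for all k with λ_k < 0. Then c^T dx = −ν_i x_j. This gives the sensitivity of the optimal value with respect to the entry G_{ij} of the equality constraint matrix. -/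
open Matrix

/-- Sensitivity with respect to `G i j`: under KKT conditions, if
`G dx = −xⱼ eᵢ` and `Aₖ dx = 0` for all `k` with `λₖ < 0`, then `cᵀ dx = −νᵢ xⱼ`. -/
theorem stmt_7 {D M1 M2 : ℕ}
    (A : Matrix (Fin M1) (Fin D) ℝ) (b : Fin M1 → ℝ)
    (G : Matrix (Fin M2) (Fin D) ℝ) (h : Fin M2 → ℝ) (c : Fin D → ℝ)
    (x dx : Fin D → ℝ) (lam : Fin M1 → ℝ) (nu : Fin M2 → ℝ)
    (i : Fin M2) (j : Fin D)
    (hineq : A.mulVec x ≤ b) (heq : G.mulVec x = h)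
    (hstat : Aᵀ.mulVec lam + Gᵀ.mulVec nu = c) (hlam : lam ≤ 0)
    (hcs : ∀ k : Fin M1, lam k * (A.mulVec x k - b k) = 0)
    (hGdx : G.mulVec dx = -(x j) • (Pi.single i 1 : Fin M2 → ℝ))
    (hAdx : ∀ k : Fin M1, lam k < 0 → A.mulVec dx k = 0) :
    c ⬝ᵥ dx = -(nu i * x j) := by
  have h1 : c ⬝ᵥ dx = lam ⬝ᵥ (A.mulVec dx) + nu ⬝ᵥ (G.mulVec dx) := by
    rw [← hstat]
    simp [add_dotProduct, dotProduct_mulVec, vecMul_transpose, mulVec_transpose]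
  have h2 : lam ⬝ᵥ (A.mulVec dx) = 0 := by
    apply Finset.sum_eq_zero
    intro k _
    rcases lt_or_eq_of_le (hlam k) with hk | hk
    · simp [hAdx k hk]
    · have : lam k = 0 := by simpa using hk
      simp [this]
  rw [h1, h2, hGdx, dotProduct_smul]
  simp [dotProduct, Pi.single_apply, mul_comm]
end

section
/- Let (x, λ, ν) satisfy the KKT conditions for the LP min c^T x s.t. Ax ≤ b, Gx = h, fix i ∈ {1,…,M1} and j ∈ {1,…,D}, and suppose dx ∈ R^D satisfies G dx = 0 and, for every k with λ_k < 0, A_k dx = −x_j δ_{ik}. Then c^T dx = −λ_i x_j. This gives the sensitivity of the optimal value with respect to the entry A_{ij} of the inequality constraint matrix. -/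
open Matrix

/-- Sensitivity with respect to `A i j`: under KKT conditions, if `G dx = 0` and
`Aₖ dx = −xⱼ δᵢₖ` for all `k` with `λₖ < 0`, then `cᵀ dx = −λᵢ xⱼ`. -/
theorem stmt_8 {D M1 M2 : ℕ}
    (A : Matrix (Fin M1) (Fin D) ℝ) (b : Fin M1 → ℝ)
    (G : Matrix (Fin M2) (Fin D) ℝ) (h : Fin M2 → ℝ) (c : Fin D → ℝ)
    (x dx : Fin D → ℝ) (lam : Fin M1 → ℝ) (nu : Fin M2 → ℝ)
    (i : Fin M1) (j : Fin D)
    (hineq : A.mulVec x ≤ b) (heq : G.mulVec x = h)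
    (hstat : Aᵀ.mulVec lam + Gᵀ.mulVec nu = c) (hlam : lam ≤ 0)
    (hcs : ∀ k : Fin M1, lam k * (A.mulVec x k - b k) = 0)
    (hGdx : G.mulVec dx = 0)
    (hAdx : ∀ k : Fin M1, lam k < 0 →
      A.mulVec dx k = -(x j) * (if i = k then 1 else 0)) :
    c ⬝ᵥ dx = -(lam i * x j) := by
  have hc : c ⬝ᵥ dx = lam ⬝ᵥ A.mulVec dx + nu ⬝ᵥ G.mulVec dx := by
    rw [← hstat, add_dotProduct, mulVec_transpose, mulVec_transpose,
      ← dotProduct_mulVec, ← dotProduct_mulVec]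
  rw [hc, hGdx, dotProduct_zero, add_zero, dotProduct]
  have hterm : ∀ k : Fin M1, lam k * A.mulVec dx k
      = -(lam k * x j) * (if i = k then 1 else 0) := by
    intro k
    rcases lt_or_eq_of_le (hlam k) with hk | hk
    · rw [hAdx k hk]; ring
    · have h0 : lam k = 0 := hk
      rw [h0]; ring
  simp only [hterm]
  rw [Finset.sum_eq_single i]
  · simp
  · intro k _ hk; simp [Ne.symm hk]
  · simp
end
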